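/- arXiv:1309.6211 — 2 statements merged into one kernel-verified Lean document; each statement's English description precedes it below -/
import Mathlib

section
/- In the unweighted case ν ≡ 1 on [0,1], the sharp constant max_{0≤x≤1} (2/ν(x)) (∫₀ˣ ν)(∫ₓ¹ ν)/(∫₀¹ ν) equals 1/2, attained at x = 1/2; hence every C¹ function f on [0,1] with ∫₀¹ f = 0 satisfies ∫₀¹ |f| ≤ (1/2) ∫₀¹ |f'|. -/
/-! Since `f` has mean zero, `(b - a) f(x) = ∫ (f x - f y) dy`; bounding `|f x - f y|` by the
integral of `|f'|` between `x` and `y` and exchanging the order of integration gives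
`∫ |f| ≤ ∫ 2 (t - a) (b - t) / (b - a) · |f' t| dt`. The weight is the paper's
`(2/ν)(∫ₐᵗ ν)(∫ₜᵇ ν)/(∫ₐᵇ ν)` for `ν ≡ 1`, and it is largest at the midpoint, where it equals
`(b - a) / 2`. -/

open MeasureTheory Set intervalIntegral
open scoped Interval

section Primitive

variable {φ : ℝ → ℝ} {a b : ℝ}

theorem integral_primitive_left_eq (hφ : ContinuousOn φ [[a, b]]) :
    ∫ y in a..b, ∫ t in y..b, φ t = ∫ t in a..b, (t - a) * φ t := by
  have hderiv : ∀ x ∈ Ioo (min a b) (max a b),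
      HasDerivAt (fun y => ∫ t in y..b, φ t) (-φ x) x := by
    intro x hx
    have hx' : x ∈ [[a, b]] := Ioo_subset_Icc_self hx
    exact integral_hasDerivAt_left
      ((hφ.mono (uIcc_subset_uIcc hx' right_mem_uIcc)).intervalIntegrable)
      ((hφ.mono Ioo_subset_Icc_self).stronglyMeasurableAtFilter isOpen_Ioo x hx)
      (hφ.continuousAt (Icc_mem_nhds hx.1 hx.2))
  have := integral_mul_deriv_eq_deriv_mul_of_hasDerivAt (v := fun y => y - _)
    (continuousOn_primitive_interval_left (hφ.integrableOn_compact isCompact_uIcc))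
    (by fun_prop) hderiv (fun x _ => (hasDerivAt_id x).sub_const a)
    hφ.intervalIntegrable.neg intervalIntegrable_const
  simp only [mul_one] at this
  rw [this]
  simp [mul_comm]

theorem integral_primitive_eq (hφ : ContinuousOn φ [[a, b]]) :
    ∫ y in a..b, ∫ t in a..y, φ t = ∫ t in a..b, (b - t) * φ t := by
  have hderiv : ∀ x ∈ Ioo (min a b) (max a b),
      HasDerivAt (fun y => ∫ t in a..y, φ t) (φ x) x := by
    intro x hx
    have hx' : x ∈ [[a, b]] := Ioo_subset_Icc_self hx
    exact integral_hasDerivAt_right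
      ((hφ.mono (uIcc_subset_uIcc left_mem_uIcc hx')).intervalIntegrable)
      ((hφ.mono Ioo_subset_Icc_self).stronglyMeasurableAtFilter isOpen_Ioo x hx)
      (hφ.continuousAt (Icc_mem_nhds hx.1 hx.2))
  have := integral_mul_deriv_eq_deriv_mul_of_hasDerivAt (v := fun y => y - _)
    (continuousOn_primitive_interval (hφ.integrableOn_compact isCompact_uIcc))
    (by fun_prop) hderiv (fun x _ => (hasDerivAt_id x).sub_const b)
    hφ.intervalIntegrable intervalIntegrable_const
  simp only [mul_one] at this
  rw [this, integral_same, sub_self, mul_zero, zero_mul, sub_zero, zero_sub,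
    ← intervalIntegral.integral_neg]
  congr 1 with t
  ring

end Primitive

section MeanZero

variable {f f' : ℝ → ℝ} {a b x : ℝ}

theorem abs_sub_le_integral_abs_deriv (hab : a ≤ b) (hf : ∀ t ∈ Icc a b, HasDerivAt f (f' t) t)
    (hf' : ContinuousOn f' (Icc a b)) : |f b - f a| ≤ ∫ t in a..b, |f' t| := by
  rw [← integral_eq_sub_of_hasDerivAt (by rwa [uIcc_of_le hab])
    (hf'.intervalIntegrable_of_Icc hab)]
  exact abs_integral_le_integral_abs hab

theorem integral_abs_sub_left_le (hax : a ≤ x) (hf : ∀ t ∈ Icc a x, HasDerivAt f (f' t) t)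
    (hf' : ContinuousOn f' (Icc a x)) :
    ∫ y in a..x, |f x - f y| ≤ ∫ t in a..x, (t - a) * |f' t| := by
  have hφ : ContinuousOn (fun t => |f' t|) [[a, x]] := by rw [uIcc_of_le hax]; exact hf'.abs
  have hfc : ContinuousOn f (Icc a x) := HasDerivAt.continuousOn hf
  rw [← integral_primitive_left_eq hφ]
  refine integral_mono_on hax ((continuousOn_const.sub hfc).abs.intervalIntegrable_of_Icc hax)
    (continuousOn_primitive_interval_left
      (hφ.integrableOn_compact isCompact_uIcc)).intervalIntegrable
    fun y hy => ?_
  exact abs_sub_le_integral_abs_deriv hy.2 (fun t ht => hf t ⟨hy.1.trans ht.1, ht.2⟩)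
    (hf'.mono (Icc_subset_Icc_left hy.1))

theorem integral_abs_sub_right_le (hxb : x ≤ b) (hf : ∀ t ∈ Icc x b, HasDerivAt f (f' t) t)
    (hf' : ContinuousOn f' (Icc x b)) :
    ∫ y in x..b, |f x - f y| ≤ ∫ t in x..b, (b - t) * |f' t| := by
  have hφ : ContinuousOn (fun t => |f' t|) [[x, b]] := by rw [uIcc_of_le hxb]; exact hf'.abs
  have hfc : ContinuousOn f (Icc x b) := HasDerivAt.continuousOn hf
  rw [← integral_primitive_eq hφ]
  refine integral_mono_on hxb ((continuousOn_const.sub hfc).abs.intervalIntegrable_of_Icc hxb)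
    (continuousOn_primitive_interval (hφ.integrableOn_compact isCompact_uIcc)).intervalIntegrable
    fun y hy => ?_
  rw [abs_sub_comm]
  exact abs_sub_le_integral_abs_deriv hy.1 (fun t ht => hf t ⟨ht.1, ht.2.trans hy.2⟩)
    (hf'.mono (Icc_subset_Icc_right hy.2))

theorem mul_abs_le_integral_abs_sub (hab : a ≤ b) (hf : IntervalIntegrable f volume a b)
    (hmean : ∫ y in a..b, f y = 0) (x : ℝ) :
    (b - a) * |f x| ≤ ∫ y in a..b, |f x - f y| := by
  have hrepr : ∫ y in a..b, (f x - f y) = (b - a) * f x := by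
    rw [integral_sub intervalIntegrable_const hf, hmean, intervalIntegral.integral_const,
      smul_eq_mul, sub_zero]
  calc (b - a) * |f x| = |∫ y in a..b, (f x - f y)| := by
        rw [hrepr, abs_mul, abs_of_nonneg (sub_nonneg.2 hab)]
    _ ≤ ∫ y in a..b, |f x - f y| := abs_integral_le_integral_abs hab

theorem mul_abs_le_integral_weighted_abs_deriv (hf : ∀ t ∈ Icc a b, HasDerivAt f (f' t) t)
    (hf' : ContinuousOn f' (Icc a b)) (hmean : ∫ y in a..b, f y = 0) (hx : x ∈ Icc a b) :
    (b - a) * |f x| ≤ (∫ t in a..x, (t - a) * |f' t|) + ∫ t in x..b, (b - t) * |f' t| := by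
  have hab : a ≤ b := hx.1.trans hx.2
  have hfc : ContinuousOn f (Icc a b) := HasDerivAt.continuousOn hf
  have hg : ContinuousOn (fun y => |f x - f y|) (Icc a b) := (continuousOn_const.sub hfc).abs
  calc (b - a) * |f x|
      ≤ ∫ y in a..b, |f x - f y| := mul_abs_le_integral_abs_sub hab
        (hfc.intervalIntegrable_of_Icc hab) hmean x
    _ = (∫ y in a..x, |f x - f y|) + ∫ y in x..b, |f x - f y| :=
        (integral_add_adjacent_intervals
          ((hg.mono (Icc_subset_Icc_right hx.2)).intervalIntegrable_of_Icc hx.1)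
          ((hg.mono (Icc_subset_Icc_left hx.1)).intervalIntegrable_of_Icc hx.2)).symm
    _ ≤ _ := add_le_add
        (integral_abs_sub_left_le hx.1 (fun t ht => hf t ⟨ht.1, ht.2.trans hx.2⟩)
          (hf'.mono (Icc_subset_Icc_right hx.2)))
        (integral_abs_sub_right_le hx.2 (fun t ht => hf t ⟨hx.1.trans ht.1, ht.2⟩)
          (hf'.mono (Icc_subset_Icc_left hx.1)))

theorem integral_abs_le_of_integral_eq_zero (hab : a < b)
    (hf : ∀ t ∈ Icc a b, HasDerivAt f (f' t) t) (hf' : ContinuousOn f' (Icc a b))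
    (hmean : ∫ y in a..b, f y = 0) :
    ∫ x in a..b, |f x| ≤ (b - a) / 2 * ∫ x in a..b, |f' x| := by
  have hφ : ContinuousOn (fun t => |f' t|) [[a, b]] := by rw [uIcc_of_le hab.le]; exact hf'.abs
  have hwa : ContinuousOn (fun t => (t - a) * |f' t|) [[a, b]] := by fun_prop
  have hwb : ContinuousOn (fun t => (b - t) * |f' t|) [[a, b]] := by fun_prop
  have hprim_a :=
    continuousOn_primitive_interval (hwa.integrableOn_compact (μ := volume) isCompact_uIcc)
  have hprim_b :=
    continuousOn_primitive_interval_left (hwb.integrableOn_compact (μ := volume) isCompact_uIcc)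
  refine le_of_mul_le_mul_left ?_ (sub_pos.2 hab)
  calc (b - a) * ∫ x in a..b, |f x|
      = ∫ x in a..b, (b - a) * |f x| := (intervalIntegral.integral_const_mul _ _).symm
    _ ≤ ∫ x in a..b, ((∫ t in a..x, (t - a) * |f' t|) + ∫ t in x..b, (b - t) * |f' t|) :=
        integral_mono_on hab.le
          ((continuousOn_const.mul
            (HasDerivAt.continuousOn hf).abs).intervalIntegrable_of_Icc hab.le)
          (hprim_a.add hprim_b).intervalIntegrable
          fun x hx => mul_abs_le_integral_weighted_abs_deriv hf hf' hmean hx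
    _ = (∫ t in a..b, (b - t) * ((t - a) * |f' t|)) +
          ∫ t in a..b, (t - a) * ((b - t) * |f' t|) := by
        rw [integral_add hprim_a.intervalIntegrable hprim_b.intervalIntegrable,
          integral_primitive_eq hwa, integral_primitive_left_eq hwb]
    _ = ∫ t in a..b, 2 * ((t - a) * (b - t)) * |f' t| := by
        rw [← intervalIntegral.integral_add
          (hwa.intervalIntegrable.continuousOn_mul (by fun_prop))
          (hwb.intervalIntegrable.continuousOn_mul (by fun_prop))]
        congr 1 with t
        ring
    _ ≤ ∫ t in a..b, (b - a) ^ 2 / 2 * |f' t| := by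
        refine integral_mono_on hab.le (ContinuousOn.intervalIntegrable (by fun_prop))
          (ContinuousOn.intervalIntegrable (by fun_prop)) fun t _ => ?_
        exact mul_le_mul_of_nonneg_right (by nlinarith [sq_nonneg (2 * t - a - b)]) (abs_nonneg _)
    _ = (b - a) * ((b - a) / 2 * ∫ t in a..b, |f' t|) := by
        rw [intervalIntegral.integral_const_mul]
        ring

end MeanZero

/-- Unweighted case `ν ≡ 1`: the sharp mean-zero Poincaré constant
`max_x 2(∫₀ˣ 1)(∫ₓ¹ 1)/(∫₀¹ 1)` equals `1/2`, attained at `x = 1/2`, and every C¹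
function with mean zero satisfies `∫₀¹|f| ≤ (1/2)∫₀¹|f'|`. -/
theorem stmt_15 (f f' : ℝ → ℝ)
    (hf : ∀ x ∈ Icc (0:ℝ) 1, HasDerivAt f (f' x) x)
    (hf' : ContinuousOn f' (Icc 0 1))
    (hmean : ∫ x in (0:ℝ)..1, f x = 0) :
    IsGreatest ((fun x => (2 / (1:ℝ)) *
        ((∫ z in (0:ℝ)..x, (1:ℝ)) * (∫ z in x..1, (1:ℝ))) / (∫ z in (0:ℝ)..1, (1:ℝ))) ''
        Icc 0 1) (1 / 2) ∧
      (2 / (1:ℝ)) * ((∫ z in (0:ℝ)..(1/2:ℝ), (1:ℝ)) * (∫ z in (1/2:ℝ)..1, (1:ℝ))) /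
          (∫ z in (0:ℝ)..1, (1:ℝ)) = 1 / 2 ∧
      ∫ x in (0:ℝ)..1, |f x| ≤ (1 / 2) * ∫ x in (0:ℝ)..1, |f' x| := by
  simp only [integral_one]
  refine ⟨⟨⟨1 / 2, by norm_num, by norm_num⟩, ?_⟩, by norm_num, ?_⟩
  · rintro y ⟨x, -, rfl⟩
    nlinarith [sq_nonneg (2 * x - 1)]
  · simpa using integral_abs_le_of_integral_eq_zero zero_lt_one hf hf' hmean
end

section
/- Let ν : [0,1] → ℝ be continuous and positive, C = max_{0≤x≤1}(1/ν(x))∫ₓ¹ ν, and g : [0,1] → ℝ increasing and right-continuous with g(0)=0. Then ∫₀¹ g(x) ν(x) dx ≤ C ∫₀¹ ν(z) dg(z), where the right side is the integral of ν against the Stieltjes measure dg. -/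
open MeasureTheory Set intervalIntegral

/-! Writing `g x - g 0 = dg((0, x])` and applying Fubini turns `∫₀¹ g ν` into
`∫_{(0,1]} (∫_z¹ ν) dg(z)`; the maximality of `C` bounds the inner integral by `C ν(z)`. -/

theorem StieltjesFunction.measureReal_Ioc_of_le (g : StieltjesFunction ℝ) {a b : ℝ} (h : a ≤ b) :
    g.measure.real (Ioc a b) = g b - g a := by
  rw [measureReal_def, g.measure_Ioc, ENNReal.toReal_ofReal (sub_nonneg.2 (g.mono h))]

theorem StieltjesFunction.integral_sub_mul_eq_integral_integral (g : StieltjesFunction ℝ)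
    {ν : ℝ → ℝ} {a b : ℝ} (hab : a ≤ b) (hν : IntegrableOn ν (Ioc a b)) :
    ∫ x in a..b, (g x - g a) * ν x = ∫ z in Ioc a b, (∫ x in z..b, ν x) ∂g.measure := by
  have : IsFiniteMeasure (g.measure.restrict (Ioc a b)) :=
    isFiniteMeasure_restrict.2 measure_Ioc_lt_top.ne
  set F : ℝ → ℝ → ℝ := fun x z => (Iic x).indicator (fun _ => ν x) z
  have hF : Integrable (Function.uncurry F)
      ((volume.restrict (Ioc a b)).prod (g.measure.restrict (Ioc a b))) := by
    have hF_eq : Function.uncurry F = {p : ℝ × ℝ | p.2 ≤ p.1}.indicator (fun p => ν p.1) := rfl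
    refine (hν.comp_fst _).mono ?_ (ae_of_all _ fun p => ?_)
    · rw [hF_eq]
      exact hν.aestronglyMeasurable.comp_fst.indicator
        (measurableSet_le measurable_snd measurable_fst)
    · rw [hF_eq]
      exact norm_indicator_le_norm_self _ _
  have integral_F_dg : ∀ x ∈ Ioc a b, ∫ z in Ioc a b, F x z ∂g.measure = (g x - g a) * ν x := by
    intro x hx
    rw [MeasureTheory.integral_indicator measurableSet_Iic,
      Measure.restrict_restrict measurableSet_Iic, Iic_inter_Ioc_of_le hx.2,
      setIntegral_const, smul_eq_mul, g.measureReal_Ioc_of_le hx.1.le]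
  have integral_F_dx : ∀ z ∈ Ioc a b, ∫ x in Ioc a b, F x z = ∫ x in z..b, ν x := by
    intro z hz
    have hF_z : (fun x => F x z) = (Ici z).indicator ν := funext fun x => by
      by_cases h : z ≤ x <;> simp [F, h]
    have hIcc : Ici z ∩ Ioc a b = Icc z b := Set.ext fun x =>
      ⟨fun h => ⟨h.1, h.2.2⟩, fun h => ⟨h.1, hz.1.trans_le h.1, h.2⟩⟩
    rw [hF_z, MeasureTheory.integral_indicator measurableSet_Ici,
      Measure.restrict_restrict measurableSet_Ici, hIcc,
      integral_Icc_eq_integral_Ioc, integral_of_le hz.2]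
  calc ∫ x in a..b, (g x - g a) * ν x
      = ∫ x in Ioc a b, ∫ z in Ioc a b, F x z ∂g.measure := by
        rw [integral_of_le hab]
        exact setIntegral_congr_fun measurableSet_Ioc fun x hx => (integral_F_dg x hx).symm
    _ = ∫ z in Ioc a b, ∫ x in Ioc a b, F x z ∂volume ∂g.measure := integral_integral_swap hF
    _ = ∫ z in Ioc a b, (∫ x in z..b, ν x) ∂g.measure :=
        setIntegral_congr_fun measurableSet_Ioc integral_F_dx

/-- BV/monotone form of the sharp weighted L¹ Poincaré inequality:
`∫₀¹ g ν dx ≤ C ∫₀¹ ν dg` for increasing right-continuous `g` with `g 0 = 0`,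
where `C = max_{0≤x≤1} (1/ν(x))∫ₓ¹ ν`. -/
theorem stmt_18 (ν : ℝ → ℝ)
    (hν : ContinuousOn ν (Icc 0 1)) (hνpos : ∀ x ∈ Icc (0:ℝ) 1, 0 < ν x)
    (C : ℝ)
    (hC : IsGreatest ((fun x => (1 / ν x) * ∫ z in x..1, ν z) '' Icc 0 1) C)
    (g : StieltjesFunction ℝ) (hg0 : g 0 = 0) :
    ∫ x in (0:ℝ)..1, g x * ν x ≤ C * ∫ z in Icc (0:ℝ) 1, ν z ∂g.measure := by
  have tail_le : ∀ z ∈ Icc (0:ℝ) 1, ∫ x in z..1, ν x ≤ C * ν z := fun z hz => by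
    have : 1 / ν z * ∫ x in z..1, ν x ≤ C := hC.2 ⟨z, hz, rfl⟩
    rw [one_div, inv_mul_le_iff₀ (hνpos z hz)] at this
    linarith
  have tail_nonneg : ∀ z ∈ Ioc (0:ℝ) 1, 0 ≤ ∫ x in z..1, ν x := fun z hz =>
    integral_nonneg hz.2 fun x hx => (hνpos x ⟨hz.1.le.trans hx.1, hx.2⟩).le
  have hC_nonneg : 0 ≤ C := by simpa using hC.2 ⟨1, right_mem_Icc.2 zero_le_one, rfl⟩
  have hν_int : IntegrableOn ν (Icc 0 1) g.measure := hν.integrableOn_compact isCompact_Icc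
  calc ∫ x in (0:ℝ)..1, g x * ν x
      = ∫ x in (0:ℝ)..1, (g x - g 0) * ν x := by simp only [hg0, sub_zero]
    _ = ∫ z in Ioc 0 1, (∫ x in z..1, ν x) ∂g.measure :=
        g.integral_sub_mul_eq_integral_integral zero_le_one
          (hν.integrableOn_Icc.mono_set Ioc_subset_Icc_self)
    _ ≤ ∫ z in Ioc 0 1, C * ν z ∂g.measure :=
        integral_mono_of_nonneg (ae_restrict_of_forall_mem measurableSet_Ioc tail_nonneg)
          ((hν_int.mono_set Ioc_subset_Icc_self).const_mul C)
          (ae_restrict_of_forall_mem measurableSet_Ioc fun z hz =>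
            tail_le z (Ioc_subset_Icc_self hz))
    _ = C * ∫ z in Ioc 0 1, ν z ∂g.measure := integral_const_mul C _
    _ ≤ C * ∫ z in Icc 0 1, ν z ∂g.measure :=
        mul_le_mul_of_nonneg_left (setIntegral_mono_set hν_int
          (ae_restrict_of_forall_mem measurableSet_Icc fun z hz => (hνpos z hz).le)
          Ioc_subset_Icc_self.eventuallyLE) hC_nonneg
end
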